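/- Let a > 0, b > 0, let k be a nonnegative integer, and set λ = a²/(4b). Then 2 b^{(k+1)/2} ∫_0^∞ x^k exp{−ax − bx²} dx = e^{λ} Σ_{h=0}^{k} C(k,h) (−1)^{k−h} λ^{(k−h)/2} Γ((h+1)/2, λ), where C(k,h) denotes the binomial coefficient. -/

import Mathlib

/-!
Since `a x + b x² = (√b x + √λ)² - λ`, the substitution `u = √b x + √λ` turns the
integral into `e^λ ∫_{√λ}^∞ (u - √λ)^k e^{-u²} du`. Expanding `(u - √λ)^k` binomially leaves the
moments `∫_{√λ}^∞ u^h e^{-u²} du`, and `t = u²` identifies each of them with `Γ((h+1)/2, λ) / 2`.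
-/

open MeasureTheory Set Real Finset

theorem integrable_pow_mul_exp_neg_mul_sq {b : ℝ} (hb : 0 < b) (n : ℕ) :
    Integrable fun x : ℝ => x ^ n * exp (-b * x ^ 2) := by
  simpa using integrable_rpow_mul_exp_neg_mul_sq hb (s := n) (by linarith [n.cast_nonneg (α := ℝ)])

theorem integral_comp_mul_add_Ioi {E : Type*} [NormedAddCommGroup E] [NormedSpace ℝ E]
    (g : ℝ → E) (a d : ℝ) {c : ℝ} (hc : 0 < c) :
    ∫ x in Ioi a, g (c * x + d) = c⁻¹ • ∫ u in Ioi (c * a + d), g u := by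
  have shift := (measurePreserving_add_right volume d).setIntegral_preimage_emb
    (measurableEmbedding_addRight d) g (Ioi (c * a + d))
  rw [preimage_add_const_Ioi, add_sub_cancel_right] at shift
  rw [integral_comp_mul_left_Ioi (fun y => g (y + d)) a hc, shift]

theorem integral_Ioi_pow_mul_exp_neg_quadratic {c : ℝ} (hc : 0 < c) (s : ℝ) (k : ℕ) :
    c ^ (k + 1) * ∫ x in Ioi 0, x ^ k * exp (-(2 * c * s * x) - c ^ 2 * x ^ 2) =
      exp (s ^ 2) * ∫ u in Ioi s, (u - s) ^ k * exp (-u ^ 2) := by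
  have hsubst := integral_comp_mul_add_Ioi (fun u => (u - s) ^ k * exp (-u ^ 2)) 0 s hc
  have hsquare (x : ℝ) : (c * x + s - s) ^ k * exp (-(c * x + s) ^ 2) =
      exp (-s ^ 2) * c ^ k * (x ^ k * exp (-(2 * c * s * x) - c ^ 2 * x ^ 2)) := by
    rw [show -(c * x + s) ^ 2 = -s ^ 2 + (-(2 * c * s * x) - c ^ 2 * x ^ 2) by ring, exp_add,
      add_sub_cancel_right, mul_pow]
    ring
  simp only [hsquare, integral_const_mul, mul_zero, zero_add, smul_eq_mul] at hsubst
  rw [← mul_inv_cancel_left₀ hc.ne' (∫ u in Ioi s, _), ← hsubst, exp_neg]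
  field_simp
  ring

theorem setIntegral_sub_pow_mul_exp_neg_sq (S : Set ℝ) (s : ℝ) (k : ℕ) :
    ∫ u in S, (u - s) ^ k * exp (-u ^ 2) =
      ∑ h ∈ range (k + 1), k.choose h * (-s) ^ (k - h) * ∫ u in S, u ^ h * exp (-u ^ 2) := by
  have hint (h : ℕ) : Integrable (fun u : ℝ => u ^ h * exp (-u ^ 2)) (volume.restrict S) := by
    simpa using (integrable_pow_mul_exp_neg_mul_sq one_pos h).restrict
  calc ∫ u in S, (u - s) ^ k * exp (-u ^ 2)
      = ∫ u in S, ∑ h ∈ range (k + 1), k.choose h * (-s) ^ (k - h) * (u ^ h * exp (-u ^ 2)) := by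
        refine integral_congr_ae (Filter.Eventually.of_forall fun u => ?_)
        simp only [sub_eq_add_neg, add_pow, sum_mul]
        exact sum_congr rfl fun h _ => by ring
    _ = _ := by
        rw [integral_finsetSum _ fun h _ => (hint h).const_mul _]
        simp_rw [integral_const_mul]

theorem integral_Ioi_rpow_mul_exp_neg_eq_two_mul (α : ℝ) {c : ℝ} (hc : 0 ≤ c) :
    ∫ t in Ioi c, t ^ (α - 1) * exp (-t) =
      2 * ∫ x in Ioi (√c), x ^ (2 * α - 1) * exp (-x ^ 2) := by
  rw [← integral_comp_rpow_Ioi_of_pos' (p := 2) two_pos hc, inv_eq_one_div, ← sqrt_eq_rpow,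
    ← integral_const_mul]
  refine setIntegral_congr_fun measurableSet_Ioi fun x hx => ?_
  have hx : 0 < x := (sqrt_nonneg c).trans_lt hx
  have hpow : x ^ (2 - 1 : ℝ) * (x ^ (2 : ℝ)) ^ (α - 1) = x ^ (2 * α - 1) := by
    rw [← rpow_mul hx.le, ← rpow_add hx]
    ring_nf
  rw [smul_eq_mul, ← hpow, rpow_two]
  ring

theorem integral_pow_mul_exp_eq_sum_incomplete_gamma
    (a b : ℝ) (ha : 0 < a) (hb : 0 < b) (k : ℕ)
    (lam : ℝ) (hlam : lam = a ^ 2 / (4 * b))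
    (Ginc : ℝ → ℝ → ℝ)
    (hGinc : ∀ α x, Ginc α x = ∫ t in Set.Ioi x, t ^ (α - 1) * Real.exp (-t)) :
    2 * b ^ (((k : ℝ) + 1) / 2) *
        ∫ x in Set.Ioi (0 : ℝ), x ^ k * Real.exp (-(a * x) - b * x ^ 2)
      = Real.exp lam *
          ∑ h ∈ Finset.range (k + 1),
            (Nat.choose k h : ℝ) * (-1 : ℝ) ^ (k - h) * lam ^ (((k : ℝ) - (h : ℝ)) / 2)
              * Ginc (((h : ℝ) + 1) / 2) lam := by
  have hlam0 : 0 ≤ lam := by rw [hlam]; positivity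
  set c := √b
  set s := √lam
  have hc : 0 < c := sqrt_pos.2 hb
  have hb_eq : b = c ^ 2 := (sq_sqrt hb.le).symm
  have ha_eq : a = 2 * c * s := by
    rw [mul_assoc, ← sqrt_mul hb.le, hlam, show b * (a ^ 2 / (4 * b)) = (a / 2) ^ 2 by
      field_simp; ring, sqrt_sq (by positivity)]
    ring
  have hbpow : b ^ (((k : ℝ) + 1) / 2) = c ^ (k + 1) := by
    rw [rpow_div_two_eq_sqrt _ hb.le, ← Nat.cast_add_one, rpow_natCast]
  have hlampow (h : ℕ) (hh : h ∈ range (k + 1)) : lam ^ (((k : ℝ) - h) / 2) = s ^ (k - h) := by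
    rw [rpow_div_two_eq_sqrt _ hlam0, ← Nat.cast_sub (mem_range_succ_iff.1 hh), rpow_natCast]
  have hGinc_eq (h : ℕ) :
      Ginc (((h : ℝ) + 1) / 2) lam = 2 * ∫ u in Ioi s, u ^ h * exp (-u ^ 2) := by
    rw [hGinc, integral_Ioi_rpow_mul_exp_neg_eq_two_mul _ hlam0]
    simp_rw [show 2 * (((h : ℝ) + 1) / 2) - 1 = h by ring, rpow_natCast]
    rfl
  rw [hbpow, mul_assoc, ha_eq, hb_eq, integral_Ioi_pow_mul_exp_neg_quadratic hc,
    sq_sqrt hlam0, setIntegral_sub_pow_mul_exp_neg_sq, mul_sum, mul_sum, mul_sum]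
  refine sum_congr rfl fun h hh => ?_
  rw [hlampow h hh, hGinc_eq, neg_pow]
  ring
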